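/- Let φ be a 3SAT(3) instance with clauses c₁,…,c_m and variables x₁,…,x_n. Let Σ consist of pairwise distinct letters x̂_v (one per variable x_v), ĉ_i^j (one per literal occurrence c_i^j), and two further letters ⊟ and ⊞. Let 𝒲 be the multiset consisting of: the clause string ĉ_i^1⊟ĉ_i^2 for each two-literal clause c_i and ĉ_i^1⊟ĉ_i^2⊟ĉ_i^3 for each three-literal clause c_i; for each variable x_v, where c_i^p and c_j^q are its two positive occurrences and c_k^r its negated occurrence, the enforcer string ĉ_i^p ⊞ ĉ_k^r x̂_v ĉ_k^r x̂_v ĉ_k^r ⊞ ĉ_j^q; and the two length-1 forbidden strings ⊟ and ⊞. Then φ is satisfiable if and only if 𝒲 has an equality-free 2-partition. -/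

import Mathlib

/-- `P` is a `K`-partition of the string `w`: a sequence of nonempty strings of
length at most `K` whose concatenation is `w`. -/
def IsPartition {α : Type*} (K : ℕ) (w : List α) (P : List (List α)) : Prop :=
  P.flatten = w ∧ ∀ p ∈ P, p ≠ [] ∧ p.length ≤ K

/-- A `K`-partition of a finite multiset (list) of strings: a choice of a
`K`-partition of each string. -/
def IsMultiPartition {α : Type*} (K : ℕ) (ws : List (List α))
    (Ps : List (List (List α))) : Prop :=
  List.Forall₂ (IsPartition K) ws Ps

/-- A partition is equality-free if no two selected strings at distinct
occurrences are equal. -/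
def EqFree {α : Type*} (P : List (List α)) : Prop := P.Pairwise (· ≠ ·)

/-- The alphabet: one letter `var v` per variable, one letter `lit i j` per
literal occurrence (the `j`-th literal of clause `i`), and the delimiters
`⊟` (minus) and `⊞` (plus). All letters are pairwise distinct by construction. -/
inductive SPLetter (n m : ℕ) where
  | var : Fin n → SPLetter n m
  | lit : Fin m → ℕ → SPLetter n m
  | minus : SPLetter n m
  | plus : SPLetter n m

/-!
In a `2`-partition of a clause word `ℓ₁ ⊟ ℓ₂ ⊟ ⋯ ⊟ ℓₖ` that does not select `⊟` alone (the
forbidden string `⊟` already does), some literal letter `ℓⱼ` must be selected alone. In an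
equality-free `2`-partition of an enforcer word `A ⊞ N x N x N ⊞ B`, if `N` is not selected alone
then `A` is, since otherwise `N x` would be selected twice; reading the word backwards, so is `B`.
Setting `x_v` true iff `N` is selected alone in its enforcer, a literal selected alone in its
clause cannot also be selected alone in the enforcer, and this forces it to be true. Conversely,
a satisfying assignment yields partitions that isolate one true literal in each clause and exactly
the false occurrences in each enforcer.
-/

section Lists

variable {α β : Type*} {R : α → β → Prop}

theorem List.forall₂_append_left_iff {l₁ l₂ : List α} {P : List β} :
    Forall₂ R (l₁ ++ l₂) P ↔ ∃ P₁ P₂, P = P₁ ++ P₂ ∧ Forall₂ R l₁ P₁ ∧ Forall₂ R l₂ P₂ := by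
  refine ⟨fun h => ?_, fun ⟨P₁, P₂, hP, h₁, h₂⟩ => hP ▸ rel_append h₁ h₂⟩
  induction l₁ generalizing P with
  | nil => exact ⟨[], P, rfl, .nil, h⟩
  | cons a l ih =>
    obtain _ | ⟨hab, h⟩ := h
    obtain ⟨P₁, P₂, rfl, h₁, h₂⟩ := ih h
    exact ⟨_ :: P₁, P₂, rfl, .cons hab h₁, h₂⟩

theorem List.forall₂_ofFn_left_iff {k : ℕ} {f : Fin k → α} {P : List β} :
    Forall₂ R (ofFn f) P ↔ ∃ g : Fin k → β, P = ofFn g ∧ ∀ i, R (f i) (g i) := by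
  refine ⟨fun h => ?_, fun ⟨g, hP, hg⟩ =>
    hP ▸ forall₂_iff_get.mpr ⟨by simp, fun i _ _ => by simpa using hg _⟩⟩
  induction k generalizing P with
  | zero => exact ⟨Fin.elim0, by simpa using h, fun i => i.elim0⟩
  | succ k ih =>
    rw [List.ofFn_succ] at h
    obtain _ | ⟨hb, h⟩ := h
    obtain ⟨g, rfl, hg⟩ := ih h
    exact ⟨Fin.cons _ g, by simp [List.ofFn_succ], Fin.cases hb hg⟩

theorem List.nodup_flatten_ofFn {k : ℕ} {f : Fin k → List α} (hf : ∀ i, (f i).Nodup)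
    (hdisj : ∀ i j, ∀ p ∈ f i, p ∈ f j → i = j) : (ofFn f).flatten.Nodup := by
  refine nodup_flatten.mpr ⟨by simpa [mem_ofFn] using hf, pairwise_ofFn.mpr fun i j hij => ?_⟩
  exact fun p hi hj => hij.ne (hdisj i j p hi hj)

theorem List.intersperse_cons_eq_cons_flatMap (s a : α) (L : List α) :
    (a :: L).intersperse s = a :: L.flatMap fun c => [s, c] := by
  induction L generalizing a with
  | nil => rfl
  | cons b L ih => simp [List.intersperse_cons_cons, ih]

theorem List.mem_or_eq_of_mem_intersperse {s a : α} {L : List α}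
    (h : a ∈ L.intersperse s) : a ∈ L ∨ a = s := by
  induction L with
  | nil => simp at h
  | cons b L ih =>
    obtain _ | ⟨c, L⟩ := L
    · simp_all
    · rw [List.intersperse_cons_cons] at h
      simp only [List.mem_cons] at h ih ⊢
      tauto

end Lists

namespace IsPartition

variable {α : Type*} {K : ℕ} {w : List α} {P : List (List α)}

theorem subset (h : IsPartition K w P) {p : List α} (hp : p ∈ P) : p ⊆ w :=
  fun _ ha => h.1 ▸ List.mem_flatten_of_mem hp ha

theorem cons {p : List α} (hp : p ≠ [] ∧ p.length ≤ K) (h : IsPartition K w P) :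
    IsPartition K (p ++ w) (p :: P) :=
  ⟨by rw [List.flatten_cons, h.1], by simpa [hp] using h.2⟩

theorem of_cons {p : List α} (h : IsPartition K w (p :: P)) :
    IsPartition K (w.drop p.length) P :=
  ⟨by simp [← h.1], fun q hq => h.2 q (List.mem_cons_of_mem p hq)⟩

theorem cons_cons {a b : α} (h : IsPartition 2 (a :: b :: w) P) :
    (∃ Q, P = [a] :: Q ∧ IsPartition 2 (b :: w) Q) ∨
      ∃ Q, P = [a, b] :: Q ∧ IsPartition 2 w Q := by
  obtain _ | ⟨p, Q⟩ := P
  · simpa using h.1.symm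
  obtain ⟨hne, hlen⟩ := h.2 p List.mem_cons_self
  have hw := h.of_cons
  obtain ⟨hflat, -⟩ := h
  match p, hne, hlen with
  | [c], _, _ =>
    simp only [List.flatten_cons, List.singleton_append, List.cons.injEq] at hflat
    obtain ⟨rfl, -⟩ := hflat
    exact Or.inl ⟨Q, rfl, hw⟩
  | [c, d], _, _ =>
    simp only [List.flatten_cons, List.cons_append, List.nil_append, List.cons.injEq] at hflat
    obtain ⟨rfl, rfl, -⟩ := hflat
    exact Or.inr ⟨Q, rfl, hw⟩

theorem reverse (h : IsPartition K w P) :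
    IsPartition K w.reverse (P.map List.reverse).reverse := by
  refine ⟨by rw [← h.1, List.reverse_flatten], fun p hp => ?_⟩
  obtain ⟨q, hq, rfl⟩ : ∃ q ∈ P, q.reverse = p := by simpa using hp
  simpa using h.2 q hq

theorem singleton_iff (hK : 1 ≤ K) {a : α} : IsPartition K [a] P ↔ P = [[a]] := by
  refine ⟨fun ⟨hflat, hP⟩ => ?_, fun h => h ▸ ⟨rfl, by simpa using hK⟩⟩
  obtain _ | ⟨p, Q⟩ := P
  · simp at hflat
  rw [List.flatten_cons, List.append_eq_singleton_iff] at hflat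
  obtain ⟨hp, -⟩ | ⟨rfl, hQ⟩ := hflat
  · exact absurd hp (hP p List.mem_cons_self).1
  obtain _ | ⟨q, Q⟩ := Q
  · rfl
  · exact absurd (List.flatten_eq_nil_iff.mp hQ q List.mem_cons_self)
      (hP q (by simp)).1

end IsPartition

theorem isMultiPartition_ofFn_append_ofFn_append_iff {α : Type*} {k l : ℕ}
    {C : Fin k → List α} {E : Fin l → List α} {a b : α} {Ps : List (List (List α))} :
    IsMultiPartition 2 (List.ofFn C ++ List.ofFn E ++ [[a], [b]]) Ps ↔
      ∃ Cp Ep, Ps = List.ofFn Cp ++ List.ofFn Ep ++ [[[a]], [[b]]] ∧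
        (∀ i, IsPartition 2 (C i) (Cp i)) ∧ ∀ v, IsPartition 2 (E v) (Ep v) := by
  simp only [IsMultiPartition, List.forall₂_append_left_iff, List.forall₂_ofFn_left_iff,
    List.forall₂_cons_left_iff, List.forall₂_nil_left_iff, IsPartition.singleton_iff one_le_two]
  constructor
  · rintro ⟨_, _, rfl, ⟨_, _, rfl, ⟨Cp, rfl, hC⟩, Ep, rfl, hE⟩, _, _, rfl, ⟨_, _, rfl, rfl, rfl⟩,
      rfl⟩
    exact ⟨Cp, Ep, rfl, hC, hE⟩
  · rintro ⟨Cp, Ep, rfl, hC, hE⟩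
    exact ⟨_, _, rfl, ⟨_, _, rfl, ⟨Cp, rfl, hC⟩, Ep, rfl, hE⟩, _, _, rfl, ⟨_, _, rfl, rfl, rfl⟩,
      rfl⟩

section ClauseGadget

variable {α : Type*} {s : α} {P : List (List α)}

theorem exists_singleton_mem_of_isPartition_intersperse {L : List α} (hL : L ≠ [])
    (h : IsPartition 2 (L.intersperse s) P) (hs : [s] ∉ P) : ∃ a ∈ L, [a] ∈ P := by
  induction L generalizing P with
  | nil => exact absurd rfl hL
  | cons a L ih =>
    obtain _ | ⟨b, L⟩ := L
    · exact ⟨a, List.mem_singleton_self a, by simp [(IsPartition.singleton_iff one_le_two).mp h]⟩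
    rw [List.intersperse_cons_cons] at h
    obtain ⟨Q, rfl, -⟩ | ⟨Q, rfl, hQ⟩ := h.cons_cons
    · exact ⟨a, List.mem_cons_self, List.mem_cons_self⟩
    · obtain ⟨c, hc, hcQ⟩ := ih (List.cons_ne_nil b L) hQ (fun h => hs (List.mem_cons_of_mem _ h))
      exact ⟨c, List.mem_cons_of_mem a hc, List.mem_cons_of_mem _ hcQ⟩

/-- The `2`-partition of `L.intersperse s` selecting the `J`-th letter of `L` alone and pairing
every other letter with the separator on its side facing that letter. -/
def isolatingPartition (s : α) : List α → ℕ → List (List α)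
  | [], _ => []
  | a :: L, 0 => [a] :: L.map fun c => [s, c]
  | [a], _ + 1 => [[a]]
  | a :: b :: L, J + 1 => [a, s] :: isolatingPartition s (b :: L) J

theorem isPartition_isolatingPartition (L : List α) (J : ℕ) :
    IsPartition 2 (L.intersperse s) (isolatingPartition s L J) := by
  induction L, J using isolatingPartition.induct with
  | case1 => exact ⟨rfl, by simp [isolatingPartition]⟩
  | case2 a L =>
    refine ⟨?_, ?_⟩
    · simp [isolatingPartition, List.intersperse_cons_eq_cons_flatMap, List.flatMap]
    · simp [isolatingPartition]
  | case3 a => exact ⟨rfl, by simp [isolatingPartition]⟩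
  | case4 a b L J ih =>
    rw [List.intersperse_cons_cons]
    exact ih.cons (p := [a, s]) (by simp)

theorem mem_isolatingPartition {L : List α} {J : ℕ} {p : List α}
    (hp : p ∈ isolatingPartition s L J) : ∃ a ∈ L, p = [a, s] ∨ p = [s, a] ∨ p = [a] := by
  induction L, J using isolatingPartition.induct with
  | case1 => simp [isolatingPartition] at hp
  | case2 a L =>
    simp only [isolatingPartition, List.mem_cons, List.mem_map] at hp
    obtain rfl | ⟨c, hc, rfl⟩ := hp
    · exact ⟨a, List.mem_cons_self, by simp⟩
    · exact ⟨c, List.mem_cons_of_mem a hc, by simp⟩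
  | case3 a => exact ⟨a, by simp, by simp_all [isolatingPartition]⟩
  | case4 a b L J ih =>
    simp only [isolatingPartition, List.mem_cons] at hp
    obtain rfl | hp := hp
    · exact ⟨a, List.mem_cons_self, by simp⟩
    · obtain ⟨c, hc, hpc⟩ := ih hp
      exact ⟨c, List.mem_cons_of_mem a hc, hpc⟩

theorem mem_of_singleton_mem_isolatingPartition {L : List α} {J : ℕ} {y : α}
    (hy : [y] ∈ isolatingPartition s L J) : y ∈ L := by
  obtain ⟨a, ha, h⟩ := mem_isolatingPartition hy
  simp only [List.cons.injEq, List.ne_cons_self, and_false, false_or] at h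
  exact h.1 ▸ ha

theorem getElem?_of_singleton_mem_isolatingPartition {L : List α} {J : ℕ} (hJ : J < L.length)
    {a : α} (ha : [a] ∈ isolatingPartition s L J) : L[J]? = some a := by
  induction L, J using isolatingPartition.induct with
  | case1 => simp [isolatingPartition] at ha
  | case2 b L => simp_all [isolatingPartition]
  | case3 b => simp at hJ
  | case4 b c L J ih =>
    simp only [isolatingPartition, List.mem_cons, List.cons.injEq] at ha
    obtain ⟨-, h⟩ | ha := ha
    · simp at h
    · simpa using ih (by simpa using hJ) ha

theorem nodup_isolatingPartition {L : List α} (hL : L.Nodup) (hs : s ∉ L) (J : ℕ) :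
    (isolatingPartition s L J).Nodup := by
  induction L, J using isolatingPartition.induct with
  | case1 => simp [isolatingPartition]
  | case2 a L =>
    simp only [isolatingPartition, List.nodup_cons, List.mem_map]
    refine ⟨by simp, (List.nodup_cons.mp hL).2.map fun c d h => by simpa using h⟩
  | case3 a => simp [isolatingPartition]
  | case4 a b L J ih =>
    rw [isolatingPartition, List.nodup_cons]
    refine ⟨fun h => ?_, ih hL.of_cons (fun h => hs (List.mem_cons_of_mem a h))⟩
    obtain ⟨c, hc, hac⟩ := mem_isolatingPartition h
    simp only [List.cons.injEq, and_true] at hac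
    obtain rfl | ⟨rfl, -⟩ | ⟨-, h⟩ := hac
    · exact (List.nodup_cons.mp hL).1 hc
    · exact hs List.mem_cons_self
    · simp at h

end ClauseGadget

section EnforcerGadget

variable {α : Type*} {a s c x b : α} {P : List (List α)}

theorem IsPartition.singleton_head_mem {w : List α}
    (h : IsPartition 2 (a :: s :: c :: x :: c :: x :: w) P) (hP : P.Nodup) (hc : [c] ∉ P) :
    [a] ∈ P := by
  obtain ⟨Q, rfl, -⟩ | ⟨Q, rfl, hQ⟩ := h.cons_cons
  · exact List.mem_cons_self
  obtain ⟨R, rfl, -⟩ | ⟨R, rfl, hR⟩ := hQ.cons_cons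
  · simp at hc
  obtain ⟨T, rfl, -⟩ | ⟨T, rfl, -⟩ := hR.cons_cons
  · simp at hc
  · simp at hP

theorem IsPartition.enforcer_dichotomy
    (h : IsPartition 2 [a, s, c, x, c, x, c, s, b] P) (hP : P.Nodup) :
    [c] ∈ P ∨ [a] ∈ P ∧ [b] ∈ P := by
  by_cases hc : [c] ∈ P
  · exact Or.inl hc
  refine Or.inr ⟨h.singleton_head_mem hP hc, ?_⟩
  have hrev := h.reverse.singleton_head_mem ?_ ?_
  · simpa using hrev
  · exact List.nodup_reverse.mpr (hP.map List.reverse_injective)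
  · simpa using hc

/-- `t` is the truth value of the enforced variable: the letters selected alone are exactly its
false occurrences (`c` stands for the negated occurrence, `a` and `b` for the positive ones). -/
def enforcerPartition (a s c x b : α) : Bool → List (List α)
  | true => [[a, s], [c, x], [c], [x, c], [s, b]]
  | false => [[a], [s, c], [x, c], [x], [c, s], [b]]

theorem isPartition_enforcerPartition (t : Bool) :
    IsPartition 2 [a, s, c, x, c, x, c, s, b] (enforcerPartition a s c x b t) := by
  cases t <;> exact ⟨rfl, by simp [enforcerPartition]⟩

theorem nodup_enforcerPartition (h : [a, b, c, x, s].Nodup) (t : Bool) :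
    (enforcerPartition a s c x b t).Nodup := by
  simp only [List.nodup_cons, List.mem_cons, List.not_mem_nil, or_false, not_or] at h
  cases t <;> simp [enforcerPartition] <;> tauto

theorem eq_of_singleton_mem_enforcerPartition {t : Bool} {y : α}
    (hy : [y] ∈ enforcerPartition a s c x b t) :
    y = x ∨ (y = c ∧ t = true) ∨ ((y = a ∨ y = b) ∧ t = false) := by
  cases t <;> simp [enforcerPartition] at hy <;> tauto

theorem exists_mem_of_mem_enforcerPartition {t : Bool} {p : List α}
    (hp : p ∈ enforcerPartition a s c x b t) : ∃ y ∈ p, y ∈ [a, b, c, x] := by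
  cases t <;> simp only [enforcerPartition, List.mem_cons, List.not_mem_nil, or_false] at hp <;>
    rcases hp with rfl | rfl | rfl | rfl | rfl | rfl <;> simp

end EnforcerGadget

namespace SPLetter

variable {n m : ℕ}

def ofPos (a : Fin m × ℕ) : SPLetter n m := lit a.1 a.2

theorem ofPos_injective : Function.Injective (ofPos : Fin m × ℕ → SPLetter n m) :=
  fun a b h => by simp only [ofPos, lit.injEq] at h; exact Prod.ext h.1 h.2

def varOf (clauses : Fin m → List (Fin n × Bool)) : SPLetter n m → Option (Fin n)
  | var v => some v
  | lit i j => ((clauses i)[j]?).map Prod.fst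
  | _ => none

end SPLetter

open SPLetter

section Reduction

variable {n m : ℕ}

def clauseLetters (clauses : Fin m → List (Fin n × Bool)) (i : Fin m) : List (SPLetter n m) :=
  (List.range (clauses i).length).map (lit i)

def clauseWord (clauses : Fin m → List (Fin n × Bool)) (i : Fin m) : List (SPLetter n m) :=
  (clauseLetters clauses i).intersperse minus

def enforcerWord (pos1 pos2 neg : Fin n → Fin m × ℕ) (v : Fin n) : List (SPLetter n m) :=
  [ofPos (pos1 v), plus, ofPos (neg v), var v, ofPos (neg v), var v, ofPos (neg v), plus,
    ofPos (pos2 v)]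

def clausePieces (clauses : Fin m → List (Fin n × Bool)) (J : Fin m → ℕ) (i : Fin m) :
    List (List (SPLetter n m)) :=
  isolatingPartition minus (clauseLetters clauses i) (J i)

def enforcerPieces (pos1 pos2 neg : Fin n → Fin m × ℕ) (τ : Fin n → Bool) (v : Fin n) :
    List (List (SPLetter n m)) :=
  enforcerPartition (ofPos (pos1 v)) plus (ofPos (neg v)) (var v) (ofPos (pos2 v)) (τ v)

variable {clauses : Fin m → List (Fin n × Bool)} {pos1 pos2 neg : Fin n → Fin m × ℕ}

theorem literal_eq_of_pos_eq {x y : Fin m × ℕ} {p q : Fin n × Bool}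
    (hx : (clauses x.1)[x.2]? = some p) (hy : (clauses y.1)[y.2]? = some q) (h : x = y) :
    p = q := by
  subst h
  exact Option.some.inj (hx.symm.trans hy)

theorem mem_clauseLetters {i : Fin m} {a : SPLetter n m} :
    a ∈ clauseLetters clauses i ↔ ∃ j < (clauses i).length, a = lit i j := by
  simp [clauseLetters, eq_comm]

theorem minus_not_mem_enforcerWord (v : Fin n) : minus ∉ enforcerWord pos1 pos2 neg v := by
  simp [enforcerWord, ofPos]

theorem nodup_flatten_clausePieces (J : Fin m → ℕ) :
    (List.ofFn (clausePieces clauses J)).flatten.Nodup := by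
  refine List.nodup_flatten_ofFn (fun i => nodup_isolatingPartition ?_ (by simp [clauseLetters]) _)
    fun i i' p hp hp' => ?_
  · exact List.nodup_range.map fun j j' h => by simpa using h
  obtain ⟨a, ha, hpa⟩ := mem_isolatingPartition hp
  have hap : a ∈ p := by rcases hpa with rfl | rfl | rfl <;> simp
  obtain ⟨j, -, rfl⟩ := mem_clauseLetters.mp ha
  rcases List.mem_or_eq_of_mem_intersperse ((isPartition_isolatingPartition _ _).subset hp' hap)
    with ha' | ha'
  · obtain ⟨j', -, h⟩ := mem_clauseLetters.mp ha'
    exact (lit.inj h).1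
  · simp at ha'

variable
  (hpos1 : ∀ v, (clauses (pos1 v).1)[(pos1 v).2]? = some (v, true))
  (hpos2 : ∀ v, (clauses (pos2 v).1)[(pos2 v).2]? = some (v, true))
  (hneg : ∀ v, (clauses (neg v).1)[(neg v).2]? = some (v, false))

include hpos1 hpos2 hneg

theorem varOf_of_mem_enforcerWord {v : Fin n} {y : SPLetter n m}
    (hy : y ∈ enforcerWord pos1 pos2 neg v) : y = plus ∨ varOf clauses y = some v := by
  simp only [enforcerWord, List.mem_cons, List.not_mem_nil, or_false] at hy
  rcases hy with rfl | rfl | rfl | rfl | rfl | rfl | rfl | rfl | rfl <;>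
    simp [varOf, ofPos, hpos1, hpos2, hneg]

theorem nodup_flatten_enforcerPieces (hdist : ∀ v, pos1 v ≠ pos2 v) (τ : Fin n → Bool) :
    (List.ofFn (enforcerPieces pos1 pos2 neg τ)).flatten.Nodup := by
  refine List.nodup_flatten_ofFn (fun v => nodup_enforcerPartition ?_ _) fun v w p hv hw => ?_
  · have h13 : pos1 v ≠ neg v := fun h => by simpa using literal_eq_of_pos_eq (hpos1 v) (hneg v) h
    have h23 : pos2 v ≠ neg v := fun h => by simpa using literal_eq_of_pos_eq (hpos2 v) (hneg v) h
    simp only [List.nodup_cons, List.mem_cons, ofPos_injective.eq_iff, hdist v, h13, h23]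
    simp [ofPos]
  obtain ⟨y, hyp, hy⟩ := exists_mem_of_mem_enforcerPartition hv
  have hw' := varOf_of_mem_enforcerWord hpos1 hpos2 hneg
    ((isPartition_enforcerPartition (τ w)).subset hw hyp)
  simp only [List.mem_cons, List.not_mem_nil, or_false] at hy
  rcases hy with rfl | rfl | rfl | rfl <;> simpa [varOf, ofPos, hpos1, hpos2, hneg] using hw'

theorem not_mem_enforcerPieces_of_mem_clausePieces
    {τ : Fin n → Bool} {J : Fin m → ℕ} (hJ : ∀ i, ∃ u, (clauses i)[J i]? = some (u, τ u))
    {i : Fin m} {v : Fin n} {p : List (SPLetter n m)} (hC : p ∈ clausePieces clauses J i) :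
    p ∉ enforcerPieces pos1 pos2 neg τ v := by
  intro hE
  have hsub := (isPartition_enforcerPartition (τ v)).subset hE
  obtain ⟨a, -, hpa⟩ := mem_isolatingPartition hC
  rcases hpa with rfl | rfl | rfl
  · exact minus_not_mem_enforcerWord v (hsub (by simp))
  · exact minus_not_mem_enforcerWord v (hsub (by simp))
  obtain ⟨u, hu⟩ := hJ i
  have hlen : J i < (clauseLetters clauses i).length := by
    simpa [clauseLetters] using (List.getElem?_eq_some_iff.mp hu).1
  have ha := getElem?_of_singleton_mem_isolatingPartition hlen hC
  rw [List.getElem?_eq_getElem hlen, Option.some_inj] at ha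
  simp only [clauseLetters, List.getElem_map, List.getElem_range] at ha
  subst ha
  have hsat : ∀ x b, (clauses x.1)[x.2]? = some (v, b) →
      (ofPos (i, J i) : SPLetter n m) = ofPos x → τ v = b := by
    intro x b hx h
    obtain ⟨rfl, hb⟩ := Prod.mk.inj (literal_eq_of_pos_eq hu hx (ofPos_injective h))
    exact hb
  rcases eq_of_singleton_mem_enforcerPartition hE with h | ⟨h, ht⟩ | ⟨h | h, ht⟩
  · simp at h
  · simp [hsat _ _ (hneg v) h] at ht
  · simp [hsat _ _ (hpos1 v) h] at ht
  · simp [hsat _ _ (hpos2 v) h] at ht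

theorem exists_isPartition_nodup_of_satisfiable
    (hdist : ∀ v, pos1 v ≠ pos2 v) {τ : Fin n → Bool} (hτ : ∀ i, ∃ p ∈ clauses i, τ p.1 = p.2) :
    ∃ (Cp : Fin m → List (List (SPLetter n m))) (Ep : Fin n → List (List (SPLetter n m))),
      (∀ i, IsPartition 2 (clauseWord clauses i) (Cp i)) ∧
      (∀ v, IsPartition 2 (enforcerWord pos1 pos2 neg v) (Ep v)) ∧
      ((List.ofFn Cp).flatten ++ (List.ofFn Ep).flatten ++ [[minus], [plus]]).Nodup := by
  have hJ : ∀ i, ∃ j u, (clauses i)[j]? = some (u, τ u) := fun i => by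
    obtain ⟨⟨u, b⟩, hp, hb⟩ := hτ i
    obtain ⟨j, hj⟩ := List.mem_iff_getElem?.mp hp
    exact ⟨j, u, by rw [hj, show τ u = b from hb]⟩
  choose J hJ using hJ
  refine ⟨clausePieces clauses J, enforcerPieces pos1 pos2 neg τ,
    fun i => isPartition_isolatingPartition _ _, fun v => isPartition_enforcerPartition _, ?_⟩
  simp only [List.nodup_append]
  refine ⟨⟨nodup_flatten_clausePieces J, nodup_flatten_enforcerPieces hpos1 hpos2 hneg hdist τ,
    ?_⟩, by simp, ?_⟩
  · simp only [List.mem_flatten, List.mem_ofFn]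
    rintro p ⟨_, ⟨i, rfl⟩, hC⟩ _ ⟨_, ⟨v, rfl⟩, hE⟩ rfl
    exact not_mem_enforcerPieces_of_mem_clausePieces hpos1 hpos2 hneg hJ hC hE
  · simp only [List.mem_append, List.mem_flatten, List.mem_ofFn, List.mem_cons,
      List.not_mem_nil, or_false]
    rintro p (⟨_, ⟨i, rfl⟩, hC⟩ | ⟨_, ⟨v, rfl⟩, hE⟩) _ (rfl | rfl) rfl <;>
      first
      | simpa [clauseLetters] using mem_of_singleton_mem_isolatingPartition hC
      | rcases eq_of_singleton_mem_enforcerPartition hE with h | ⟨h, -⟩ | ⟨h | h, -⟩ <;>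
          simp [ofPos] at h

theorem satisfiable_of_isPartition_nodup
    (hne : ∀ i, clauses i ≠ [])
    (hocc : ∀ (v : Fin n) (b : Bool) (i : Fin m) (j : ℕ),
      (clauses i)[j]? = some (v, b) → (i, j) = pos1 v ∨ (i, j) = pos2 v ∨ (i, j) = neg v)
    {Cp : Fin m → List (List (SPLetter n m))} {Ep : Fin n → List (List (SPLetter n m))}
    (hC : ∀ i, IsPartition 2 (clauseWord clauses i) (Cp i))
    (hE : ∀ v, IsPartition 2 (enforcerWord pos1 pos2 neg v) (Ep v))
    (hnd : ((List.ofFn Cp).flatten ++ (List.ofFn Ep).flatten ++ [[minus], [plus]]).Nodup) :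
    ∃ τ : Fin n → Bool, ∀ i, ∃ p ∈ clauses i, τ p.1 = p.2 := by
  simp only [List.nodup_append, List.nodup_flatten, List.mem_flatten, List.mem_ofFn] at hnd
  obtain ⟨⟨-, ⟨hEnd, -⟩, hCE⟩, -, hF⟩ := hnd
  have hEp : ∀ v, (Ep v).Nodup := fun v => hEnd _ ⟨v, rfl⟩
  have hdisj : ∀ {i v p}, p ∈ Cp i → p ∉ Ep v :=
    fun hC hE => hCE _ ⟨_, ⟨_, rfl⟩, hC⟩ _ ⟨_, ⟨_, rfl⟩, hE⟩ rfl
  have hminus : ∀ i, [minus] ∉ Cp i :=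
    fun i h => hF _
      (List.mem_append_left _ (List.mem_flatten_of_mem (List.mem_ofFn.mpr ⟨i, rfl⟩) h))
      _ List.mem_cons_self rfl
  classical
  refine ⟨fun v => decide ([ofPos (neg v)] ∈ Ep v), fun i => ?_⟩
  obtain ⟨a, ha, hmem⟩ := exists_singleton_mem_of_isPartition_intersperse
    (by simpa [clauseLetters] using hne i) (hC i) (hminus i)
  obtain ⟨j, hj, rfl⟩ := mem_clauseLetters.mp ha
  refine ⟨(clauses i)[j], List.getElem_mem hj, ?_⟩
  have hub : (clauses i)[j]? = some (clauses i)[j] := List.getElem?_eq_getElem hj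
  generalize (clauses i)[j] = q at hub
  obtain ⟨u, b⟩ := q
  have hnot : ∀ x, (i, j) = x → [ofPos x] ∉ Ep u := by
    rintro x rfl
    exact hdisj hmem
  have hdich := (hE u).enforcer_dichotomy (hEp u)
  rcases hocc u b i j hub with h | h | h
  · obtain rfl := (Prod.mk.inj (literal_eq_of_pos_eq hub (hpos1 u) h)).2
    simpa using hdich.resolve_right fun h' => hnot _ h h'.1
  · obtain rfl := (Prod.mk.inj (literal_eq_of_pos_eq hub (hpos2 u) h)).2
    simpa using hdich.resolve_right fun h' => hnot _ h h'.2
  · obtain rfl := (Prod.mk.inj (literal_eq_of_pos_eq hub (hneg u) h)).2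
    simpa using hnot _ h

end Reduction

/-- A literal is a pair of a variable and a polarity (`true` meaning positive); `pos1 v`,
`pos2 v` and `neg v` are the positions (clause, index) of the occurrences of the variable `v`. -/
theorem stmt_2 (n m : ℕ) (clauses : Fin m → List (Fin n × Bool))
    (hlen : ∀ i, (clauses i).length = 2 ∨ (clauses i).length = 3)
    (pos1 pos2 neg : Fin n → Fin m × ℕ)
    (hpos1 : ∀ v, (clauses (pos1 v).1)[(pos1 v).2]? = some (v, true))
    (hpos2 : ∀ v, (clauses (pos2 v).1)[(pos2 v).2]? = some (v, true))
    (hneg : ∀ v, (clauses (neg v).1)[(neg v).2]? = some (v, false))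
    (hdist : ∀ v, pos1 v ≠ pos2 v)
    (hocc : ∀ (v : Fin n) (b : Bool) (i : Fin m) (j : ℕ),
      (clauses i)[j]? = some (v, b) →
        (i, j) = pos1 v ∨ (i, j) = pos2 v ∨ (i, j) = neg v) :
    (∃ τ : Fin n → Bool, ∀ i, ∃ p ∈ clauses i, τ p.1 = p.2) ↔
    (∃ Ps, IsMultiPartition 2
      ((List.ofFn fun i : Fin m =>
          List.intersperse (SPLetter.minus : SPLetter n m)
            ((List.range (clauses i).length).map fun j => SPLetter.lit i j)) ++
       (List.ofFn fun v : Fin n =>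
          [SPLetter.lit (pos1 v).1 (pos1 v).2, SPLetter.plus,
           SPLetter.lit (neg v).1 (neg v).2, SPLetter.var v,
           SPLetter.lit (neg v).1 (neg v).2, SPLetter.var v,
           SPLetter.lit (neg v).1 (neg v).2, SPLetter.plus,
           SPLetter.lit (pos2 v).1 (pos2 v).2]) ++
       [[SPLetter.minus], [SPLetter.plus]]) Ps ∧ EqFree Ps.flatten) := by
  have hne : ∀ i, clauses i ≠ [] := fun i h => by simpa [h] using hlen i
  constructor
  · rintro ⟨τ, hτ⟩
    obtain ⟨Cp, Ep, hC, hE, hnd⟩ :=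
      exists_isPartition_nodup_of_satisfiable hpos1 hpos2 hneg hdist hτ
    refine ⟨_, isMultiPartition_ofFn_append_ofFn_append_iff.mpr ⟨Cp, Ep, rfl, hC, hE⟩, ?_⟩
    simpa [EqFree, List.Nodup] using hnd
  · rintro ⟨Ps, hPs, hEF⟩
    obtain ⟨Cp, Ep, rfl, hC, hE⟩ := isMultiPartition_ofFn_append_ofFn_append_iff.mp hPs
    refine satisfiable_of_isPartition_nodup hpos1 hpos2 hneg hne hocc hC hE ?_
    simpa [EqFree, List.Nodup] using hEF
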